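/- If π_s R† π_t for the lifting of a relation R, and π_s ⊨ ⊕_{i∈I} r_i φ_i where each φ_i is preserved by R (i.e., s R t and s ⊨ φ_i imply t ⊨ φ_i), then π_t ⊨ ⊕_{i∈I} r_i φ_i. -/

import Mathlib

open scoped ENNReal Classical

/-- The Dirac distribution at `t`. -/
noncomputable def dirac {T : Type*} (t : T) : T → ℝ≥0∞ :=
  fun s => if s = t then 1 else 0

/-- The lifting of a relation `R ⊆ T × T` to probability distributions on `T`:
`π R† π'` iff there are a countable index set `I`, weights `p i ∈ (0,1]` summing to `1`,
and elements `s i, t i` with `R (s i) (t i)` for all `i`, such that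
`π = ∑ i, p i • δ_{s i}` and `π' = ∑ i, p i • δ_{t i}`. -/
def Lift {T : Type*} (R : T → T → Prop) (π π' : T → ℝ≥0∞) : Prop :=
  ∃ (I : Type) (_ : Countable I) (p : I → ℝ≥0∞) (s t : I → T),
    (∀ i, 0 < p i ∧ p i ≤ 1) ∧ (∑' i, p i = 1) ∧ (∀ i, R (s i) (t i)) ∧
    (∀ u, π u = ∑' i, p i * dirac (s i) u) ∧
    (∀ u, π' u = ∑' i, p i * dirac (t i) u)

/-!
Write `π_s = ∑ⱼ pⱼ δ_{sⱼ}` and `π_t = ∑ⱼ pⱼ δ_{tⱼ}` with `sⱼ R tⱼ`. The mass `pⱼ` sitting at `sⱼ`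
is split among the components of `π_s = ∑ᵢ rᵢ πᵢ` in proportion to `rᵢ πᵢ(sⱼ) / π_s(sⱼ)` and
moved to `tⱼ`; this gives `π'ᵢ = ∑ⱼ (πᵢ(sⱼ) / π_s(sⱼ)) pⱼ δ_{tⱼ}`. It has mass
`∑ᵤ (πᵢ(u) / π_s(u)) π_s(u) = 1` (as `rᵢ > 0`, `πᵢ` vanishes wherever `π_s` does), recombines
to `π_t`, and `π'ᵢ(tⱼ) ≠ 0` forces `πᵢ(sⱼ) ≠ 0`, hence `φᵢ(sⱼ)` and so `φᵢ(tⱼ)` because `R`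
preserves `φᵢ`.
-/

section DiracSum

variable {T J : Type*}

noncomputable def diracSum (w : J → ℝ≥0∞) (x : J → T) (u : T) : ℝ≥0∞ :=
  ∑' j, w j * dirac (x j) u

theorem tsum_mul_dirac (g : T → ℝ≥0∞) (a : T) : ∑' u, g u * dirac a u = g a := by
  rw [tsum_eq_single a]
  · simp [dirac]
  · intro b hb
    simp [dirac, hb]

theorem tsum_mul_diracSum (g : T → ℝ≥0∞) (w : J → ℝ≥0∞) (x : J → T) :
    ∑' u, g u * diracSum w x u = ∑' j, g (x j) * w j := by
  simp only [diracSum, ← ENNReal.tsum_mul_left]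
  rw [ENNReal.tsum_comm]
  refine tsum_congr fun j => ?_
  simpa only [mul_assoc] using tsum_mul_dirac (fun u => g u * w j) (x j)

theorem tsum_diracSum (w : J → ℝ≥0∞) (x : J → T) : ∑' u, diracSum w x u = ∑' j, w j := by
  simpa using tsum_mul_diracSum 1 w x

theorem diracSum_le_tsum (w : J → ℝ≥0∞) (x : J → T) (u : T) : diracSum w x u ≤ ∑' j, w j :=
  (ENNReal.le_tsum u).trans (tsum_diracSum w x).le

theorem le_diracSum (w : J → ℝ≥0∞) (x : J → T) (j : J) : w j ≤ diracSum w x (x j) :=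
  calc w j = w j * dirac (x j) (x j) := by simp [dirac]
    _ ≤ diracSum w x (x j) := ENNReal.le_tsum j

theorem tsum_mul_diracSum_eq {I : Type*} (r : I → ℝ≥0∞) (w : I → J → ℝ≥0∞) (x : J → T)
    (u : T) : ∑' i, r i * diracSum (w i) x u = diracSum (fun j => ∑' i, r i * w i j) x u := by
  simp only [diracSum, ← ENNReal.tsum_mul_left, ← ENNReal.tsum_mul_right, mul_assoc]
  exact ENNReal.tsum_comm

theorem exists_of_diracSum_ne_zero {w : J → ℝ≥0∞} {x : J → T} {u : T}
    (h : diracSum w x u ≠ 0) : ∃ j, w j ≠ 0 ∧ x j = u := by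
  obtain ⟨j, hj⟩ := not_forall.mp (mt ENNReal.tsum_eq_zero.mpr h)
  refine ⟨j, left_ne_zero_of_mul hj, ?_⟩
  by_contra hne
  simp [dirac, Ne.symm hne] at hj

end DiracSum

section Transport

variable {T J : Type*} {p : J → ℝ≥0∞} {s : J → T}

noncomputable def transport (p : J → ℝ≥0∞) (s t : J → T) (π : T → ℝ≥0∞) : T → ℝ≥0∞ :=
  diracSum (fun j => π (s j) / diracSum p s (s j) * p j) t

theorem tsum_transport (t : J → T) {π : T → ℝ≥0∞} (hfin : ∀ u, diracSum p s u ≠ ∞)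
    (hπ : ∀ u, diracSum p s u = 0 → π u = 0) :
    ∑' u, transport p s t π u = ∑' u, π u :=
  calc ∑' u, transport p s t π u = ∑' j, π (s j) / diracSum p s (s j) * p j :=
        tsum_diracSum _ _
    _ = ∑' u, π u / diracSum p s u * diracSum p s u :=
        (tsum_mul_diracSum (fun u => π u / diracSum p s u) p s).symm
    _ = ∑' u, π u := tsum_congr fun u =>
        ENNReal.div_mul_cancel' (hπ u) (fun htop => absurd htop (hfin u))

theorem tsum_mul_transport {I : Type*} (t : J → T) (r : I → ℝ≥0∞) {π : I → T → ℝ≥0∞}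
    (hfin : ∀ u, diracSum p s u ≠ ∞) (hp : ∀ j, p j ≠ 0)
    (hdecomp : ∀ u, diracSum p s u = ∑' i, r i * π i u) (u : T) :
    ∑' i, r i * transport p s t (π i) u = diracSum p t u := by
  unfold transport
  rw [tsum_mul_diracSum_eq]
  congr 1
  funext j
  have hpos : diracSum p s (s j) ≠ 0 := ((hp j).bot_lt.trans_le (le_diracSum p s j)).ne'
  calc ∑' i, r i * (π i (s j) / diracSum p s (s j) * p j)
      = (∑' i, r i * π i (s j)) / diracSum p s (s j) * p j := by
        simp only [div_eq_mul_inv, ← ENNReal.tsum_mul_right, mul_assoc]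
    _ = p j := by rw [← hdecomp, ENNReal.div_self hpos (hfin _), one_mul]

theorem exists_of_transport_ne_zero {t : J → T} {π : T → ℝ≥0∞} {u : T}
    (h : transport p s t π u ≠ 0) : ∃ j, π (s j) ≠ 0 ∧ t j = u := by
  obtain ⟨j, hj, rfl⟩ := exists_of_diracSum_ne_zero h
  exact ⟨j, fun h0 => hj (by simp [h0]), rfl⟩

end Transport

theorem lift_preserves_distribution_formula_general {T : Type*}
    (R : T → T → Prop) (πs πt : T → ℝ≥0∞) (h : Lift R πs πt)
    (I : Type)
    (r : I → ℝ≥0∞) (hr : ∀ i, 0 < r i ∧ r i ≤ 1)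
    (φ : I → T → Prop) (hpres : ∀ i, ∀ s t : T, R s t → φ i s → φ i t)
    (hsat : ∃ πis : I → T → ℝ≥0∞,
      (∀ i, ∑' t, πis i t = 1) ∧
      (∀ u, πs u = ∑' i, r i * πis i u) ∧
      (∀ i, ∀ t : T, πis i t ≠ 0 → φ i t)) :
    ∃ πis' : I → T → ℝ≥0∞,
      (∀ i, ∑' t, πis' i t = 1) ∧
      (∀ u, πt u = ∑' i, r i * πis' i u) ∧
      (∀ i, ∀ t : T, πis' i t ≠ 0 → φ i t) := by
  obtain ⟨J, -, p, s, t, hp, hpsum, hR, hπs, hπt⟩ := h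
  obtain ⟨πis, hmass, hdecomp, hsupp⟩ := hsat
  obtain rfl : πs = diracSum p s := funext hπs
  obtain rfl : πt = diracSum p t := funext hπt
  have hfin : ∀ u, diracSum p s u ≠ ∞ := fun u =>
    ((diracSum_le_tsum p s u).trans_eq hpsum).trans_lt ENNReal.one_lt_top |>.ne
  have hzero : ∀ i u, diracSum p s u = 0 → πis i u = 0 := fun i u h0 =>
    (mul_eq_zero.mp (ENNReal.tsum_eq_zero.mp (hdecomp u ▸ h0) i)).resolve_left (hr i).1.ne'
  refine ⟨fun i => transport p s t (πis i), fun i => ?_, fun u => ?_, fun i u hu => ?_⟩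
  · rw [tsum_transport t hfin (hzero i), hmass i]
  · exact (tsum_mul_transport t r hfin (fun j => (hp j).1.ne') hdecomp u).symm
  · obtain ⟨j, hj, rfl⟩ := exists_of_transport_ne_zero hu
    exact hpres i _ _ (hR j) (hsupp i _ hj)

/-- If `π_s R† π_t` and `π_s` satisfies the distribution formula `⊕ i, r i φ i`
(i.e. `π_s = ∑ i, r i • π i` with every state in `supp (π i)` satisfying `φ i`),
where each `φ i` is preserved by `R`, then `π_t` satisfies `⊕ i, r i φ i` as well. -/
theorem lift_preserves_distribution_formula {T : Type*} [Countable T]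
    (R : T → T → Prop) (πs πt : T → ℝ≥0∞) (h : Lift R πs πt)
    (I : Type) [Countable I] [Nonempty I]
    (r : I → ℝ≥0∞) (hr : ∀ i, 0 < r i ∧ r i ≤ 1) (hrsum : ∑' i, r i = 1)
    (φ : I → T → Prop) (hpres : ∀ i, ∀ s t : T, R s t → φ i s → φ i t)
    (hsat : ∃ πis : I → T → ℝ≥0∞,
      (∀ i, ∑' t, πis i t = 1) ∧
      (∀ u, πs u = ∑' i, r i * πis i u) ∧
      (∀ i, ∀ t : T, πis i t ≠ 0 → φ i t)) :
    ∃ πis' : I → T → ℝ≥0∞,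
      (∀ i, ∑' t, πis' i t = 1) ∧
      (∀ u, πt u = ∑' i, r i * πis' i u) ∧
      (∀ i, ∀ t : T, πis' i t ≠ 0 → φ i t) :=
  lift_preserves_distribution_formula_general R πs πt h I r hr φ hpres hsat
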